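/- For every x = (x₁,x₂) with x₂ > 0, one has (1/(2π²))·∫_ℝ [1/((x₁−y₁)² + x₂²)]·(x₂, y₁−x₁)/(1+y₁²) dy₁ = (1/(2π))·(1+x₂, −x₁)/(x₁² + (1+x₂)²), where the identity holds componentwise for the two-dimensional vector-valued integral. -/

import Mathlib

/-!
Both components are integrals of `(c y + d) / (((y - a)² + b²)(1 + y²))` over `ℝ`. Splitting
into partial fractions gives a primitive made of `log ((y - a)² + b²) - log (1 + y²)`, which
vanishes at `±∞`, and of `arctan ((y - a) / b)` and `arctan y`, which jump by `π` across `ℝ`.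
The decomposition breaks down only when the two quadratic factors coincide (`a = 0`, `b = 1`),
where `d/2 · arctan y + (d y - c) / (2 (1 + y²))` is a primitive instead.
-/

open MeasureTheory Filter Topology Real Asymptotics Bornology

theorem tendsto_affine_div_sq_add_sq_cocompact (a b c d : ℝ) :
    Tendsto (fun y : ℝ => (c * y + d) / ((y - a) ^ 2 + b ^ 2)) (cocompact ℝ) (𝓝 0) := by
  have hinv : Tendsto (fun t : ℝ => (c * t + d * t ^ 2) / ((1 - a * t) ^ 2 + (b * t) ^ 2))
      (𝓝 0) (𝓝 0) := by
    have : ContinuousAt (fun t : ℝ => (c * t + d * t ^ 2) / ((1 - a * t) ^ 2 + (b * t) ^ 2)) 0 :=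
      by fun_prop (disch := norm_num)
    simpa using this.tendsto
  rw [← Metric.cobounded_eq_cocompact]
  refine (hinv.comp tendsto_inv₀_cobounded).congr' ?_
  filter_upwards [eventually_ne_cobounded 0] with y hy
  rw [Function.comp_apply, ← mul_div_mul_left _ _ (pow_ne_zero 2 hy)]
  congr 1 <;> field_simp

theorem tendsto_log_sub_log_cocompact (a b : ℝ) :
    Tendsto (fun y : ℝ => log ((y - a) ^ 2 + b ^ 2) - log (1 + y ^ 2)) (cocompact ℝ) (𝓝 0) := by
  have hinv : Tendsto (fun t : ℝ => log (((1 - a * t) ^ 2 + (b * t) ^ 2) / (1 + t ^ 2)))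
      (𝓝 0) (𝓝 0) := by
    have : ContinuousAt (fun t : ℝ => log (((1 - a * t) ^ 2 + (b * t) ^ 2) / (1 + t ^ 2))) 0 :=
      by fun_prop (disch := norm_num)
    simpa using this.tendsto
  rw [← Metric.cobounded_eq_cocompact]
  refine (hinv.comp tendsto_inv₀_cobounded).congr' ?_
  filter_upwards [eventually_ne_cobounded 0, eventually_ne_cobounded a] with y hy₀ hya
  have hya' : y - a ≠ 0 := sub_ne_zero.2 hya
  rw [Function.comp_apply, ← log_div (by positivity) (by positivity)]
  field_simp
  ring_nf

theorem integrable_affine_div_sq_add_sq_mul_one_add_sq (a b c d : ℝ) (hb : b ≠ 0) :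
    Integrable (fun y : ℝ => (c * y + d) / (((y - a) ^ 2 + b ^ 2) * (1 + y ^ 2))) := by
  have hcont : Continuous (fun y : ℝ => (c * y + d) / (((y - a) ^ 2 + b ^ 2) * (1 + y ^ 2))) :=
    by fun_prop (disch := intro y; positivity)
  refine hcont.locallyIntegrable.integrable_of_isBigO_cocompact ?_
    (integrable_inv_one_add_sq.integrableAtFilter _)
  have := ((tendsto_affine_div_sq_add_sq_cocompact a b c d).isBigO_one ℝ).mul
    (isBigO_refl (fun y : ℝ => (1 + y ^ 2)⁻¹) (cocompact ℝ))
  refine (this.congr_left fun y => ?_).congr_right fun y => one_mul _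
  rw [div_mul_eq_div_div, div_eq_mul_inv (_ / _)]

noncomputable def partialFractionPrimitive (a b α β δ y : ℝ) : ℝ :=
  α / 2 * (log ((y - a) ^ 2 + b ^ 2) - log (1 + y ^ 2)) + β / b * arctan ((y - a) / b)
    + δ * arctan y

theorem hasDerivAt_partialFractionPrimitive (a α β δ y : ℝ) {b : ℝ} (hb : b ≠ 0) :
    HasDerivAt (partialFractionPrimitive a b α β δ)
      ((α * (y - a) + β) / ((y - a) ^ 2 + b ^ 2) - (α * y - δ) / (1 + y ^ 2)) y := by
  have hQ₁ : HasDerivAt (fun y : ℝ => (y - a) ^ 2 + b ^ 2) (2 * (y - a)) y := by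
    simpa using (((hasDerivAt_id y).sub_const a).pow 2).add_const (b ^ 2)
  have hQ₂ : HasDerivAt (fun y : ℝ => 1 + y ^ 2) (2 * y) y := by
    simpa using (hasDerivAt_pow 2 y).const_add 1
  have harctan : HasDerivAt (fun y : ℝ => arctan ((y - a) / b))
      (1 / (1 + ((y - a) / b) ^ 2) * (1 / b)) y :=
    (((hasDerivAt_id y).sub_const a).div_const b).arctan
  refine ((((hQ₁.log (by positivity)).sub (hQ₂.log (by positivity))).const_mul (α / 2)).add
    (harctan.const_mul (β / b)) |>.add ((hasDerivAt_arctan y).const_mul δ)).congr_deriv ?_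
  field_simp
  ring

theorem tendsto_partialFractionPrimitive_atTop (a α β δ : ℝ) {b : ℝ} (hb : 0 < b) :
    Tendsto (partialFractionPrimitive a b α β δ) atTop (𝓝 ((β / b + δ) * (π / 2))) := by
  have harctan : Tendsto (fun y : ℝ => arctan ((y - a) / b)) atTop (𝓝 (π / 2)) :=
    tendsto_nhds_of_tendsto_nhdsWithin tendsto_arctan_atTop |>.comp <|
      (tendsto_atTop_add_const_right _ (-a) tendsto_id).atTop_div_const hb
  rw [show (β / b + δ) * (π / 2) = α / 2 * 0 + β / b * (π / 2) + δ * (π / 2) by ring]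
  exact (((tendsto_log_sub_log_cocompact a b).mono_left atTop_le_cocompact).const_mul (α / 2)).add
    (harctan.const_mul (β / b)) |>.add
    ((tendsto_nhds_of_tendsto_nhdsWithin tendsto_arctan_atTop).const_mul δ)

theorem tendsto_partialFractionPrimitive_atBot (a α β δ : ℝ) {b : ℝ} (hb : 0 < b) :
    Tendsto (partialFractionPrimitive a b α β δ) atBot (𝓝 (-((β / b + δ) * (π / 2)))) := by
  have harctan : Tendsto (fun y : ℝ => arctan ((y - a) / b)) atBot (𝓝 (-(π / 2))) :=
    tendsto_nhds_of_tendsto_nhdsWithin tendsto_arctan_atBot |>.comp <|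
      (tendsto_atBot_add_const_right _ (-a) tendsto_id).atBot_div_const hb
  rw [show -((β / b + δ) * (π / 2)) = α / 2 * 0 + β / b * -(π / 2) + δ * -(π / 2) by ring]
  exact (((tendsto_log_sub_log_cocompact a b).mono_left atBot_le_cocompact).const_mul (α / 2)).add
    (harctan.const_mul (β / b)) |>.add
    ((tendsto_nhds_of_tendsto_nhdsWithin tendsto_arctan_atBot).const_mul δ)

theorem integral_affine_div_sq_add_sq_mul_one_add_sq_of_ne {a b : ℝ} (c d : ℝ) (hb : 0 < b)
    (hab : a ≠ 0 ∨ b ≠ 1) :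
    ∫ y : ℝ, (c * y + d) / (((y - a) ^ 2 + b ^ 2) * (1 + y ^ 2))
      = π * (a * c + (1 + b) * d) / (b * (a ^ 2 + (1 + b) ^ 2)) := by
  have hD₁ : a ^ 2 + (1 + b) ^ 2 ≠ 0 := by positivity
  have hD₂ : a ^ 2 + (1 - b) ^ 2 ≠ 0 := by
    rcases hab with ha | hb₁
    · positivity
    · have : 1 - b ≠ 0 := sub_ne_zero.2 hb₁.symm
      positivity
  -- `D = |z - i|² |z + i|²` for `z = a + i b`, the determinant of the linear system
  -- `c y + d = (α (y - a) + β)(1 + y²) - (α y - δ)((y - a)² + b²)` solved below.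
  set r := a ^ 2 + b ^ 2 - 1 with hr
  set D := (a ^ 2 + (1 + b) ^ 2) * (a ^ 2 + (1 - b) ^ 2) with hD
  have hDne : D ≠ 0 := mul_ne_zero hD₁ hD₂
  have hF : ∀ y, HasDerivAt (partialFractionPrimitive a b (-(c * r + 2 * a * d) / D)
      ((a * c * r + 2 * a ^ 2 * d - r * d + 2 * a * c) / D) ((r * d - 2 * a * c) / D))
      ((c * y + d) / (((y - a) ^ 2 + b ^ 2) * (1 + y ^ 2))) y := by
    intro y
    refine (hasDerivAt_partialFractionPrimitive a _ _ _ y hb.ne').congr_deriv ?_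
    field_simp
    rw [hr, hD]
    ring
  rw [integral_of_hasDerivAt_of_tendsto hF
    (integrable_affine_div_sq_add_sq_mul_one_add_sq a b c d hb.ne')
    (tendsto_partialFractionPrimitive_atBot a _ _ _ hb)
    (tendsto_partialFractionPrimitive_atTop a _ _ _ hb)]
  field_simp
  rw [hr, hD]
  ring

theorem integral_affine_div_one_add_sq_sq (c d : ℝ) :
    ∫ y : ℝ, (c * y + d) / (1 + y ^ 2) ^ 2 = π * d / 2 := by
  have hrat : Tendsto (fun y : ℝ => (d * y - c) / (2 * (1 + y ^ 2))) (cocompact ℝ) (𝓝 0) := by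
    refine (tendsto_affine_div_sq_add_sq_cocompact 0 1 (d / 2) (-c / 2)).congr fun y => ?_
    field_simp
    ring
  have hF : ∀ y, HasDerivAt (fun y => d / 2 * arctan y + (d * y - c) / (2 * (1 + y ^ 2)))
      ((c * y + d) / (1 + y ^ 2) ^ 2) y := by
    intro y
    have hQ : HasDerivAt (fun y : ℝ => 2 * (1 + y ^ 2)) (2 * (2 * y)) y := by
      simpa using ((hasDerivAt_pow 2 y).const_add 1).const_mul 2
    refine (((hasDerivAt_arctan y).const_mul (d / 2)).add
      ((((hasDerivAt_id' y).const_mul d).sub_const c).div hQ (by positivity))).congr_deriv ?_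
    field_simp
    ring
  have hint : Integrable fun y : ℝ => (c * y + d) / (1 + y ^ 2) ^ 2 := by
    simpa [sq, add_comm] using integrable_affine_div_sq_add_sq_mul_one_add_sq 0 1 c d one_ne_zero
  rw [integral_of_hasDerivAt_of_tendsto hF hint
    (((tendsto_nhds_of_tendsto_nhdsWithin tendsto_arctan_atBot).const_mul (d / 2)).add
      (hrat.mono_left atBot_le_cocompact))
    (((tendsto_nhds_of_tendsto_nhdsWithin tendsto_arctan_atTop).const_mul (d / 2)).add
      (hrat.mono_left atTop_le_cocompact))]
  ring

theorem integral_affine_div_sq_add_sq_mul_one_add_sq (a c d : ℝ) {b : ℝ} (hb : 0 < b) :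
    ∫ y : ℝ, (c * y + d) / (((y - a) ^ 2 + b ^ 2) * (1 + y ^ 2))
      = π * (a * c + (1 + b) * d) / (b * (a ^ 2 + (1 + b) ^ 2)) := by
  by_cases hab : a = 0 ∧ b = 1
  · obtain ⟨rfl, rfl⟩ := hab
    convert integral_affine_div_one_add_sq_sq c d using 1
    · simp_rw [sub_zero, one_pow, add_comm _ (1 : ℝ), ← sq]
    · ring
  · exact integral_affine_div_sq_add_sq_mul_one_add_sq_of_ne c d hb (not_and_or.1 hab)

theorem boundary_layer_velocity_identity (x₁ x₂ : ℝ) (hx₂ : 0 < x₂) :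
    ((1 / (2 * Real.pi^2)) * ∫ y₁ : ℝ, (1 / ((x₁ - y₁)^2 + x₂^2)) * x₂ / (1 + y₁^2)
        = (1 / (2 * Real.pi)) * ((1 + x₂) / (x₁^2 + (1 + x₂)^2)))
    ∧ ((1 / (2 * Real.pi^2)) * ∫ y₁ : ℝ, (1 / ((x₁ - y₁)^2 + x₂^2)) * (y₁ - x₁) / (1 + y₁^2)
        = (1 / (2 * Real.pi)) * (-x₁ / (x₁^2 + (1 + x₂)^2))) := by
  have hkernel : ∀ (f : ℝ → ℝ) (y : ℝ), (1 / ((x₁ - y) ^ 2 + x₂ ^ 2)) * f y / (1 + y ^ 2)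
      = f y / (((y - x₁) ^ 2 + x₂ ^ 2) * (1 + y ^ 2)) := fun f y => by
    rw [div_mul_eq_div_div]
    ring
  have h₁ := integral_affine_div_sq_add_sq_mul_one_add_sq x₁ 0 x₂ hx₂
  have h₂ := integral_affine_div_sq_add_sq_mul_one_add_sq x₁ 1 (-x₁) hx₂
  simp only [zero_mul, zero_add, one_mul, ← sub_eq_add_neg] at h₁ h₂
  simp only [hkernel (fun _ => x₂), hkernel (fun y => y - x₁), h₁, h₂]
  constructor <;> field_simp <;> ring
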